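/- The rational spin Calogero–Moser Lax matrix satisfies a dynamical linear r-matrix relation: let L be the N×N matrix with entries L_{ij} = δ_{ij} p_i + (1−δ_{ij}) h_{ij}/x_{ij}, and let r = −Σ_{i≠j} (1/x_{ij}) e_{ij}⊗e_{ji} acting on ℂ^N⊗ℂ^N, with r_{21} := P r P where P is the flip (so r_{21} = −r). Then at every point where all x_i are pairwise distinct, the matrix {L ⊗, L} whose ((i,k),(j,l)) entry is the Poisson bracket {L_{ij}, L_{kl}} equals [r, L⊗Id] − [r_{21}, Id⊗L] + Σ_{m=1}^N h_{mm} · ∂r/∂x_m. -/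

import Mathlib

/-!
Write u_ij = (x_i - x_j)⁻¹ for i ≠ j and u_ii = 0. Then L_ij = δ_ij p_i + h_ij u_ij, and all partial derivatives of the
entries of L are explicit, so both sides can be compared entry by entry. The r-matrix is odd under
the flip, r₂₁ = -r, so the right-hand side is [r, L ⊗ 1 + 1 ⊗ L] + Σ_m h_mm ∂r/∂x_m. The entries
of the two sides then agree case by case according to which of the four indices coincide; when
three of them are distinct this is the identity u_ij u_jk + u_jk u_ki + u_ki u_ij = 0.
-/

noncomputable section
open Matrix
open scoped Kronecker BigOperators

variable (N l : ℕ)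

structure Phase (N l : ℕ) where
  x : Fin N → ℝ
  p : Fin N → ℝ
  a : Fin N → Fin l → ℝ
  b : Fin N → Fin l → ℝ

def Dx (i : Fin N) (F : Phase N l → ℝ) (z : Phase N l) : ℝ :=
  deriv (fun t : ℝ => F { z with x := Function.update z.x i t }) (z.x i)

def Dp (i : Fin N) (F : Phase N l → ℝ) (z : Phase N l) : ℝ :=
  deriv (fun t : ℝ => F { z with p := Function.update z.p i t }) (z.p i)

def Da (i : Fin N) (α : Fin l) (F : Phase N l → ℝ) (z : Phase N l) : ℝ :=
  deriv (fun t : ℝ =>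
    F { z with a := Function.update z.a i (Function.update (z.a i) α t) }) (z.a i α)

def Db (i : Fin N) (α : Fin l) (F : Phase N l → ℝ) (z : Phase N l) : ℝ :=
  deriv (fun t : ℝ =>
    F { z with b := Function.update z.b i (Function.update (z.b i) α t) }) (z.b i α)

/-- the Poisson bracket, with {p_i,x_j} = δ_{ij} and {a_i^α, b_j^β} = −δ_{ij}δ_{αβ} -/
def pb (F G : Phase N l → ℝ) (z : Phase N l) : ℝ :=
  (∑ i : Fin N, (Dp N l i F z * Dx N l i G z - Dx N l i F z * Dp N l i G z)) -
  ∑ i : Fin N, ∑ α : Fin l,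
    (Da N l i α F z * Db N l i α G z - Db N l i α F z * Da N l i α G z)

/-- the spin variables h_{ij} = Σ_α b_i^α a_j^α -/
def hspin (i j : Fin N) (z : Phase N l) : ℝ := ∑ α : Fin l, z.b i α * z.a j α

/-- the rational spin Calogero–Moser Lax matrix entries
    L_{ij} = δ_{ij} p_i + (1−δ_{ij}) h_{ij}/x_{ij} -/
def LaxE (i j : Fin N) (z : Phase N l) : ℝ :=
  if i = j then z.p i else hspin N l i j z / (z.x i - z.x j)

/-- the Lax matrix -/
def Lax (z : Phase N l) : Matrix (Fin N) (Fin N) ℝ := fun i j => LaxE N l i j z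

def E (i j : Fin N) : Matrix (Fin N) (Fin N) ℝ := Matrix.single i j 1

/-- the flip operator P = Σ_{i,j} e_{ij}⊗e_{ji} -/
def flipP : Matrix (Fin N × Fin N) (Fin N × Fin N) ℝ :=
  ∑ i : Fin N, ∑ j : Fin N, E N i j ⊗ₖ E N j i

/-- the rational r-matrix r = −Σ_{i≠j} (1/x_{ij}) e_{ij}⊗e_{ji}, as a function of x -/
def rRat (x : Fin N → ℝ) : Matrix (Fin N × Fin N) (Fin N × Fin N) ℝ :=
  - ∑ i : Fin N, ∑ j : Fin N,
      if i ≠ j then (1 / (x i - x j)) • (E N i j ⊗ₖ E N j i) else 0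

/-- entrywise partial derivative ∂r/∂x_m -/
def pderivMat (m : Fin N) (f : (Fin N → ℝ) → Matrix (Fin N × Fin N) (Fin N × Fin N) ℝ)
    (x : Fin N → ℝ) : Matrix (Fin N × Fin N) (Fin N × Fin N) ℝ :=
  fun p q => deriv (fun t : ℝ => f (Function.update x m t) p q) (x m)

def mcomm (A B : Matrix (Fin N × Fin N) (Fin N × Fin N) ℝ) :
    Matrix (Fin N × Fin N) (Fin N × Fin N) ℝ := A * B - B * A

section Calculus

variable {ι : Type*} [DecidableEq ι]

lemma hasDerivAt_update_apply (v : ι → ℝ) (m i : ι) :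
    HasDerivAt (fun t => Function.update v m t i) (if i = m then 1 else 0) (v m) := by
  simpa [Pi.single_apply] using hasDerivAt_pi.1 (hasDerivAt_update v m (v m)) i

lemma hasDerivAt_sum_mul_update [Fintype ι] (c v : ι → ℝ) (α : ι) :
    HasDerivAt (fun t => ∑ β, c β * Function.update v α t β) (c α) (v α) := by
  simpa using HasDerivAt.fun_sum (u := Finset.univ) fun β _ =>
    (hasDerivAt_update_apply v α β).const_mul (c β)

lemma deriv_inv_sub_update {x : ι → ℝ} (hx : Function.Injective x) (m i j : ι) :
    deriv (fun t => (Function.update x m t i - Function.update x m t j)⁻¹) (x m) =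
      -((if i = m then 1 else 0) - (if j = m then 1 else 0)) * (x i - x j)⁻¹ ^ 2 := by
  rcases eq_or_ne i j with rfl | hij
  · simp
  have hne : x i - x j ≠ 0 := sub_ne_zero.2 (hx.ne hij)
  have := ((hasDerivAt_update_apply x m i).fun_sub (hasDerivAt_update_apply x m j)).fun_inv
    (by simpa using hne)
  rw [this.deriv]
  simp only [Function.update_eq_self]
  field_simp

end Calculus

lemma inv_sub_mul_inv_sub_cyclic {K : Type*} [Field K] {a b c : K} (hab : a ≠ b) (hbc : b ≠ c)
    (hca : c ≠ a) :
    (a - b)⁻¹ * (b - c)⁻¹ + (b - c)⁻¹ * (c - a)⁻¹ + (c - a)⁻¹ * (a - b)⁻¹ = 0 := by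
  have := sub_ne_zero.2 hab; have := sub_ne_zero.2 hbc; have := sub_ne_zero.2 hca
  field_simp
  ring

section

variable {N l}

-- The diagonal terms excluded in `rRat` may be included, since `(x i - x i)⁻¹ = 0`; the same
-- convention makes the formulas for `LaxE` below hold on the diagonal as well.
lemma rRat_eq_sum (x : Fin N → ℝ) :
    rRat N x = -∑ i, ∑ j, (x i - x j)⁻¹ • (E N i j ⊗ₖ E N j i) := by
  unfold rRat
  congr! 3 with i _ j
  split_ifs with h
  · rw [one_div]
  · simp [not_not.1 h]

lemma rRat_apply (x : Fin N → ℝ) (i k j w : Fin N) :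
    rRat N x (i, k) (j, w) = if k = j ∧ w = i then -(x i - x j)⁻¹ else 0 := by
  simp only [rRat_eq_sum, E, single_kronecker_single, smul_single, smul_eq_mul, mul_one,
    Matrix.neg_apply, Matrix.sum_apply, single_apply, Prod.mk.injEq, ite_and, Finset.sum_ite_irrel,
    Finset.sum_const_zero, Finset.sum_ite_eq', Finset.mem_univ, if_true]
  grind

lemma flipP_apply (p q : Fin N × Fin N) : flipP N p q = if p.swap = q then 1 else 0 := by
  rcases p with ⟨i, k⟩; rcases q with ⟨j, w⟩
  simp [flipP, E, single_kronecker_single, Matrix.sum_apply, single_apply, ite_and, eq_comm]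

lemma flipP_mul_mul_flipP (M : Matrix (Fin N × Fin N) (Fin N × Fin N) ℝ) :
    flipP N * M * flipP N = M.submatrix Prod.swap Prod.swap := by
  ext p q
  simp [Matrix.mul_apply, flipP_apply, @eq_comm _ p.swap, Prod.swap_eq_iff_eq_swap]

lemma flipP_mul_rRat_mul_flipP (x : Fin N → ℝ) :
    flipP N * rRat N x * flipP N = -rRat N x := by
  ext ⟨i, k⟩ ⟨j, w⟩
  rw [flipP_mul_mul_flipP, submatrix_apply, Matrix.neg_apply, Prod.swap_prod_mk, Prod.swap_prod_mk,
    rRat_apply, rRat_apply]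
  split_ifs with h₁ h₂ h₂ <;> grind [neg_sub, inv_neg]

lemma mcomm_neg_left (A B : Matrix (Fin N × Fin N) (Fin N × Fin N) ℝ) :
    mcomm N (-A) B = -mcomm N A B := by
  simp only [mcomm, Matrix.neg_mul, Matrix.mul_neg, neg_sub_neg, neg_sub]

lemma mcomm_rRat_kronecker_one_apply (x : Fin N → ℝ) (A : Matrix (Fin N) (Fin N) ℝ)
    (i k j w : Fin N) :
    mcomm N (rRat N x) (A ⊗ₖ 1) (i, k) (j, w) =
      (if k = j then (x w - x j)⁻¹ * A i w else 0) -
        if w = i then (x i - x k)⁻¹ * A k j else 0 := by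
  simp only [mcomm, Matrix.sub_apply, Matrix.mul_apply, Fintype.sum_prod_type, kroneckerMap_apply,
    one_apply, rRat_apply, ite_and, ite_mul, mul_ite, mul_one, zero_mul, mul_zero,
    Finset.sum_ite_irrel, Finset.sum_const_zero, Finset.sum_ite_eq, Finset.sum_ite_eq',
    Finset.mem_univ, if_true]
  split_ifs <;> ring

lemma mcomm_rRat_one_kronecker_apply (x : Fin N → ℝ) (A : Matrix (Fin N) (Fin N) ℝ)
    (i k j w : Fin N) :
    mcomm N (rRat N x) (1 ⊗ₖ A) (i, k) (j, w) =
      (if w = i then (x i - x j)⁻¹ * A k j else 0) -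
        if k = j then (x i - x j)⁻¹ * A i w else 0 := by
  simp only [mcomm, Matrix.sub_apply, Matrix.mul_apply, Fintype.sum_prod_type, kroneckerMap_apply,
    one_apply, rRat_apply, ite_and, ite_mul, mul_ite, one_mul, zero_mul, mul_zero,
    Finset.sum_ite_irrel, Finset.sum_const_zero, Finset.sum_ite_eq, Finset.sum_ite_eq',
    Finset.mem_univ, if_true]
  split_ifs <;> ring

lemma pderivMat_rRat_apply {x : Fin N → ℝ} (hx : Function.Injective x) (m i k j w : Fin N) :
    pderivMat N m (rRat N) x (i, k) (j, w) =
      if k = j ∧ w = i then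
        ((if i = m then 1 else 0) - (if j = m then 1 else 0)) * (x i - x j)⁻¹ ^ 2
      else 0 := by
  simp only [pderivMat, rRat_apply]
  by_cases h : k = j ∧ w = i
  · simp only [if_pos h]
    rw [deriv.fun_neg, deriv_inv_sub_update hx]
    ring
  · simp [if_neg h]

lemma sum_smul_pderivMat_rRat_apply {x : Fin N → ℝ} (hx : Function.Injective x) (c : Fin N → ℝ)
    (i k j w : Fin N) :
    (∑ m, c m • pderivMat N m (rRat N) x) (i, k) (j, w) =
      if k = j ∧ w = i then (c i - c j) * (x i - x j)⁻¹ ^ 2 else 0 := by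
  simp only [Matrix.sum_apply, Matrix.smul_apply, pderivMat_rRat_apply hx, smul_eq_mul, mul_ite,
    mul_zero, Finset.sum_ite_irrel, Finset.sum_const_zero, ← mul_assoc, ← Finset.sum_mul, mul_sub,
    Finset.sum_sub_distrib, mul_one, Finset.sum_ite_eq, Finset.mem_univ, if_true]

lemma LaxE_eq (i j : Fin N) (z : Phase N l) :
    LaxE N l i j z = if i = j then z.p i else hspin N l i j z * (z.x i - z.x j)⁻¹ := by
  simp [LaxE, div_eq_mul_inv]

lemma Dp_LaxE (m i j : Fin N) (z : Phase N l) :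
    Dp N l m (LaxE N l i j) z = if i = j ∧ i = m then 1 else 0 := by
  unfold Dp
  rcases eq_or_ne i j with rfl | hij
  · simpa [LaxE] using (hasDerivAt_update_apply z.p m i).deriv
  · simp [LaxE, hij, hspin]

lemma Dx_LaxE {z : Phase N l} (hx : Function.Injective z.x) (m i j : Fin N) :
    Dx N l m (LaxE N l i j) z =
      -hspin N l i j z * ((if i = m then 1 else 0) - (if j = m then 1 else 0)) *
        (z.x i - z.x j)⁻¹ ^ 2 := by
  unfold Dx
  rcases eq_or_ne i j with rfl | hij
  · simp [LaxE]
  simp only [LaxE_eq, if_neg hij]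
  change deriv (fun t => hspin N l i j z * _) _ = _
  rw [deriv_const_mul_field, deriv_inv_sub_update hx]
  ring

lemma Da_LaxE (m : Fin N) (α : Fin l) (i j : Fin N) (z : Phase N l) :
    Da N l m α (LaxE N l i j) z = if j = m then z.b i α * (z.x i - z.x j)⁻¹ else 0 := by
  unfold Da
  rcases eq_or_ne i j with rfl | hij
  · simp [LaxE]
  simp only [LaxE_eq, if_neg hij, hspin]
  split_ifs with hjm
  · subst hjm
    simp only [Function.update_self]
    rw [deriv_mul_const_field, (hasDerivAt_sum_mul_update _ _ _).deriv]
  · simp [Function.update_of_ne hjm]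

lemma Db_LaxE (m : Fin N) (α : Fin l) (i j : Fin N) (z : Phase N l) :
    Db N l m α (LaxE N l i j) z = if i = m then z.a j α * (z.x i - z.x j)⁻¹ else 0 := by
  unfold Db
  rcases eq_or_ne i j with rfl | hij
  · simp [LaxE]
  simp only [LaxE_eq, if_neg hij, hspin]
  split_ifs with him
  · subst him
    simp only [Function.update_self, mul_comm _ (z.a j _)]
    rw [deriv_mul_const_field, (hasDerivAt_sum_mul_update _ _ _).deriv]
  · simp [Function.update_of_ne him]

lemma pb_LaxE {z : Phase N l} (hx : Function.Injective z.x) (i j k w : Fin N) :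
    pb N l (LaxE N l i j) (LaxE N l k w) z =
      (if k = w then ((if i = k then 1 else 0) - (if j = k then 1 else 0)) *
          hspin N l i j z * (z.x i - z.x j)⁻¹ ^ 2 else 0) -
        (if i = j then ((if k = i then 1 else 0) - (if w = i then 1 else 0)) *
          hspin N l k w z * (z.x k - z.x w)⁻¹ ^ 2 else 0) +
        (if w = i then hspin N l k j z * ((z.x i - z.x j)⁻¹ * (z.x k - z.x w)⁻¹) else 0) -
        (if j = k then hspin N l i w z * ((z.x i - z.x j)⁻¹ * (z.x k - z.x w)⁻¹) else 0) := by
  have hpx : ∑ m, (Dp N l m (LaxE N l i j) z * Dx N l m (LaxE N l k w) z -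
      Dx N l m (LaxE N l i j) z * Dp N l m (LaxE N l k w) z) =
      (if k = w then ((if i = k then 1 else 0) - (if j = k then 1 else 0)) *
          hspin N l i j z * (z.x i - z.x j)⁻¹ ^ 2 else 0) -
        (if i = j then ((if k = i then 1 else 0) - (if w = i then 1 else 0)) *
          hspin N l k w z * (z.x k - z.x w)⁻¹ ^ 2 else 0) := by
    simp only [Dp_LaxE, Dx_LaxE hx, Finset.sum_sub_distrib, ite_and, ite_mul, mul_ite, zero_mul,
      mul_zero, one_mul, mul_one, Finset.sum_ite_irrel, Finset.sum_const_zero, Finset.sum_ite_eq,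
      Finset.mem_univ, if_true]
    split_ifs <;> ring
  have hab : ∑ m, ∑ α, (Da N l m α (LaxE N l i j) z * Db N l m α (LaxE N l k w) z -
      Db N l m α (LaxE N l i j) z * Da N l m α (LaxE N l k w) z) =
      (if j = k then hspin N l i w z * ((z.x i - z.x j)⁻¹ * (z.x k - z.x w)⁻¹) else 0) -
        (if w = i then hspin N l k j z * ((z.x i - z.x j)⁻¹ * (z.x k - z.x w)⁻¹) else 0) := by
    simp only [Da_LaxE, Db_LaxE, Finset.sum_sub_distrib, ite_mul, mul_ite, zero_mul, mul_zero,
      Finset.sum_ite_irrel, Finset.sum_const_zero, Finset.sum_ite_eq, Finset.mem_univ, if_true,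
      @eq_comm _ i w]
    simp only [hspin, Finset.mul_sum, mul_comm, mul_assoc, mul_left_comm]
  rw [pb, hpx, hab]
  ring

lemma pb_LaxE_eq_rmatrix_apply {z : Phase N l} (hx : Function.Injective z.x) (i k j w : Fin N) :
    pb N l (LaxE N l i j) (LaxE N l k w) z =
      ((if k = j then (z.x w - z.x j)⁻¹ * LaxE N l i w z else 0) -
          (if w = i then (z.x i - z.x k)⁻¹ * LaxE N l k j z else 0)) +
        ((if w = i then (z.x i - z.x j)⁻¹ * LaxE N l k j z else 0) -
          (if k = j then (z.x i - z.x j)⁻¹ * LaxE N l i w z else 0)) +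
        (if k = j ∧ w = i then (hspin N l i i z - hspin N l j j z) * (z.x i - z.x j)⁻¹ ^ 2
          else 0) := by
  have u_swap : ∀ a b, (z.x b - z.x a)⁻¹ = -(z.x a - z.x b)⁻¹ := fun a b => by
    rw [← inv_neg, neg_sub]
  have u_diag : ∀ a, (z.x a - z.x a)⁻¹ = 0 := by simp
  rw [pb_LaxE hx, LaxE_eq, LaxE_eq]
  rcases eq_or_ne i w with rfl | hiw <;> rcases eq_or_ne j k with rfl | hjk
  · rcases eq_or_ne i j with rfl | hij
    · simp only [↓reduceIte, and_self, u_diag]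
      ring
    · simp only [hij, hij.symm, ↓reduceIte, and_self, u_swap j i]
      ring
  · rcases eq_or_ne i j with rfl | hij
    · simp only [hjk, hjk.symm, ↓reduceIte, u_diag, and_true, u_swap k i]
      ring
    rcases eq_or_ne i k with rfl | hik
    · simp only [hjk, hij, ↓reduceIte, u_diag, and_true]
      ring
    · simp only [hjk, hjk.symm, hij, hik.symm, ↓reduceIte, and_true, u_swap k i, u_swap j k]
      linear_combination hspin N l k j z *
        inv_sub_mul_inv_sub_cyclic (hx.ne hij) (hx.ne hjk) (hx.ne hik.symm)
  · rcases eq_or_ne i j with rfl | hij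
    · simp only [hiw, hiw.symm, ↓reduceIte, u_diag, and_false, u_swap w i]
      ring
    rcases eq_or_ne j w with rfl | hjw
    · simp only [hiw, hiw.symm, ↓reduceIte, u_diag, and_false]
      ring
    · simp only [hiw, hiw.symm, hij, hjw, ↓reduceIte, and_false, u_swap j w, u_swap w i]
      linear_combination -hspin N l i w z *
        inv_sub_mul_inv_sub_cyclic (hx.ne hij) (hx.ne hjw) (hx.ne hiw.symm)
  · simp only [hiw.symm, hjk, hjk.symm, ↓reduceIte, and_false]
    grind

end

theorem rational_spinCM_rmatrix
    (z : Phase N l) (hx : Function.Injective z.x) :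
    (Matrix.of fun (p : Fin N × Fin N) (q : Fin N × Fin N) =>
        pb N l (LaxE N l p.1 q.1) (LaxE N l p.2 q.2) z) =
      mcomm N (rRat N z.x) (Lax N l z ⊗ₖ (1 : Matrix (Fin N) (Fin N) ℝ)) -
      mcomm N (flipP N * rRat N z.x * flipP N) ((1 : Matrix (Fin N) (Fin N) ℝ) ⊗ₖ Lax N l z) +
      ∑ m : Fin N, hspin N l m m z • pderivMat N m (rRat N) z.x := by
  rw [flipP_mul_rRat_mul_flipP, mcomm_neg_left, sub_neg_eq_add]
  ext ⟨i, k⟩ ⟨j, w⟩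
  simp only [of_apply, Matrix.add_apply, mcomm_rRat_kronecker_one_apply,
    mcomm_rRat_one_kronecker_apply, sum_smul_pderivMat_rRat_apply hx, Lax]
  exact pb_LaxE_eq_rmatrix_apply hx i k j w
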